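/- arXiv:0805.0051 — 3 statements merged into one kernel-verified Lean document; each statement's English description precedes it below -/
import Mathlib

section
/- In a directed acyclic graph, if P1 is a path from s to t1 and P2 is a path from s to t2 (same source s, possibly different terminals), then there exists a vertex u and paths P1' from s to t1 and P2' from s to t2, using only edges of P1 ∪ P2, such that P1' and P2' coincide on the segment from s to u and are vertex-disjoint after u (share no vertex other than u beyond that point). -/
/-- A walk in the digraph with adjacency relation `A`, given as a list of directed
edges (ordered pairs of vertices). -/
def IsWalk {V : Type*} (A : V → V → Prop) : V → List (V × V) → V → Prop
  | u, [], w => u = w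
  | u, e :: es, w => e.1 = u ∧ A e.1 e.2 ∧ IsWalk A e.2 es w

/-- The digraph `A` is acyclic (no nonempty closed walk). -/
def IsAcyclic {V : Type*} (A : V → V → Prop) : Prop :=
  ∀ (v : V) (l : List (V × V)), l ≠ [] → ¬ IsWalk A v l v

lemma isWalk_append {V : Type*} {A : V → V → Prop} :
    ∀ {l1 : List (V × V)} {u m w : V} {l2 : List (V × V)},
      IsWalk A u l1 m → IsWalk A m l2 w → IsWalk A u (l1 ++ l2) w
  | [], u, m, w, l2, h1, h2 => by cases h1; exact h2
  | e :: es, u, m, w, l2, h1, h2 =>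
    ⟨h1.1, h1.2.1, isWalk_append h1.2.2 h2⟩

lemma isWalk_split {V : Type*} {A : V → V → Prop} :
    ∀ {l : List (V × V)} {u w : V} (x : V),
      IsWalk A u l w → x ∈ l.map Prod.snd →
      ∃ l1 l2, l = l1 ++ l2 ∧ l1 ≠ [] ∧ IsWalk A u l1 x ∧ IsWalk A x l2 w
  | [], u, w, x, _, hx => by simp at hx
  | e :: es, u, w, x, hw, hx => by
    rcases List.mem_cons.mp hx with h | h
    · exact ⟨[e], es, rfl, by simp, ⟨hw.1, hw.2.1, h.symm⟩, h ▸ hw.2.2⟩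
    · obtain ⟨l1, l2, hsplit, hne, hw1, hw2⟩ := isWalk_split x hw.2.2 h
      exact ⟨e :: l1, l2, by simp [hsplit], by simp, ⟨hw.1, hw.2.1, hw1⟩, hw2⟩

lemma key_aux {V : Type*} (A : V → V → Prop) :
    ∀ (n : ℕ) (s t1 t2 : V) (P1 P2 : List (V × V)),
      P1.length + P2.length ≤ n → IsWalk A s P1 t1 → IsWalk A s P2 t2 →
      ∃ (u : V) (Q Q1 Q2 : List (V × V)),
        IsWalk A s Q u ∧ IsWalk A u Q1 t1 ∧ IsWalk A u Q2 t2 ∧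
        (∀ e ∈ Q ++ Q1, e ∈ P1 ∨ e ∈ P2) ∧
        (∀ e ∈ Q ++ Q2, e ∈ P1 ∨ e ∈ P2) ∧
        (∀ x, x ∈ Q1.map Prod.snd → x ∉ Q2.map Prod.snd) := by
  intro n
  induction n with
  | zero =>
    intro s t1 t2 P1 P2 hn h1 h2
    have hP1 : P1 = [] := List.length_eq_zero_iff.mp (by omega)
    have hP2 : P2 = [] := List.length_eq_zero_iff.mp (by omega)
    subst hP1; subst hP2
    exact ⟨s, [], [], [], rfl, h1, h2, by simp, by simp, by simp⟩
  | succ n ih =>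
    intro s t1 t2 P1 P2 hn h1 h2
    by_cases hdisj : ∀ x, x ∈ P1.map Prod.snd → x ∉ P2.map Prod.snd
    · exact ⟨s, [], P1, P2, rfl, h1, h2,
        fun e he => Or.inl (by simpa using he),
        fun e he => Or.inr (by simpa using he), hdisj⟩
    · push_neg at hdisj
      obtain ⟨x, hx1, hx2⟩ := hdisj
      obtain ⟨A1, B1, hP1, hne1, hwA1, hwB1⟩ := isWalk_split x h1 hx1
      obtain ⟨A2, B2, hP2, hne2, hwA2, hwB2⟩ := isWalk_split x h2 hx2
      have hlen : B1.length + B2.length ≤ n := by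
        have l1 : 1 ≤ A1.length := Nat.one_le_iff_ne_zero.mpr
          (by simpa using hne1)
        have l2 : 1 ≤ A2.length := Nat.one_le_iff_ne_zero.mpr
          (by simpa using hne2)
        have := congrArg List.length hP1
        have := congrArg List.length hP2
        simp only [List.length_append] at *
        omega
      obtain ⟨u, Q, Q1, Q2, hwQ, hwQ1, hwQ2, hm1, hm2, hd⟩ :=
        ih x t1 t2 B1 B2 hlen hwB1 hwB2
      refine ⟨u, A1 ++ Q, Q1, Q2, isWalk_append hwA1 hwQ, hwQ1, hwQ2, ?_, ?_, hd⟩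
      · intro e he
        rcases (by simpa using he : e ∈ A1 ∨ e ∈ Q ∨ e ∈ Q1) with h | h | h
        · exact Or.inl (hP1 ▸ List.mem_append_left _ h)
        · rcases hm1 e (List.mem_append_left _ h) with h' | h'
          · exact Or.inl (hP1 ▸ List.mem_append_right _ h')
          · exact Or.inr (hP2 ▸ List.mem_append_right _ h')
        · rcases hm1 e (List.mem_append_right _ h) with h' | h'
          · exact Or.inl (hP1 ▸ List.mem_append_right _ h')
          · exact Or.inr (hP2 ▸ List.mem_append_right _ h')
      · intro e he
        rcases (by simpa using he : e ∈ A1 ∨ e ∈ Q ∨ e ∈ Q2) with h | h | h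
        · exact Or.inl (hP1 ▸ List.mem_append_left _ h)
        · rcases hm2 e (List.mem_append_left _ h) with h' | h'
          · exact Or.inl (hP1 ▸ List.mem_append_right _ h')
          · exact Or.inr (hP2 ▸ List.mem_append_right _ h')
        · rcases hm2 e (List.mem_append_right _ h) with h' | h'
          · exact Or.inl (hP1 ▸ List.mem_append_right _ h')
          · exact Or.inr (hP2 ▸ List.mem_append_right _ h')

/-- In a finite DAG, given a path `P1` from `s` to `t1` and a path `P2`
from `s` to `t2`, there exist a vertex `u` and new paths `Q ++ Q1` (from `s` to `t1`) and
`Q ++ Q2` (from `s` to `t2`), using only edges of `P1 ∪ P2`, which coincide on the common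
prefix `Q` from `s` to `u` and are vertex-disjoint after `u` (the vertices strictly after
`u` on the two suffixes are disjoint). -/
theorem shared_prefix_of_paths_from_common_source
    {V : Type*} [Fintype V] (A : V → V → Prop) (hA : IsAcyclic A)
    (s t1 t2 : V) (P1 P2 : List (V × V))
    (h1 : IsWalk A s P1 t1) (h2 : IsWalk A s P2 t2) :
    ∃ (u : V) (Q Q1 Q2 : List (V × V)),
      IsWalk A s Q u ∧ IsWalk A u Q1 t1 ∧ IsWalk A u Q2 t2 ∧
      IsWalk A s (Q ++ Q1) t1 ∧ IsWalk A s (Q ++ Q2) t2 ∧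
      (∀ e ∈ Q ++ Q1, e ∈ P1 ∨ e ∈ P2) ∧
      (∀ e ∈ Q ++ Q2, e ∈ P1 ∨ e ∈ P2) ∧
      (∀ x, x ∈ Q1.map Prod.snd → x ∉ Q2.map Prod.snd) := by
  obtain ⟨u, Q, Q1, Q2, hwQ, hwQ1, hwQ2, hm1, hm2, hd⟩ :=
    key_aux A (P1.length + P2.length) s t1 t2 P1 P2 le_rfl h1 h2
  exact ⟨u, Q, Q1, Q2, hwQ, hwQ1, hwQ2, isWalk_append hwQ hwQ1,
    isWalk_append hwQ hwQ2, hm1, hm2, hd⟩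
end

section
/- Let G be a directed acyclic graph with n source vertices S1,...,Sn and two terminal vertices T1, T2 such that for every i and every j ∈ {1,2} there exists a directed path from Si to Tj. Then there exists a subgraph G* of G such that for every i and j ∈ {1,2} there exists exactly one directed path in G* from Si to Tj. -/
def Reaches {V : Type*} (A : V → V → Prop) (v t : V) : Prop := ∃ P, IsWalk A v P t

lemma reaches_refl {V : Type*} (A : V → V → Prop) (t : V) : Reaches A t t := ⟨[], rfl⟩

lemma reaches_head {V : Type*} {A : V → V → Prop} {v u t : V} (h : A v u)
    (hr : Reaches A u t) : Reaches A v t := by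
  obtain ⟨P, hP⟩ := hr; exact ⟨(v, u) :: P, rfl, h, hP⟩

lemma exists_step {V : Type*} {A : V → V → Prop} {v t : V} (h : Reaches A v t)
    (hv : v ≠ t) : ∃ u, A v u ∧ Reaches A u t := by
  obtain ⟨P, hP⟩ := h
  cases P with
  | nil => exact absurd hP hv
  | cons e es =>
    obtain ⟨h1, h2, h3⟩ := hP
    exact ⟨e.2, h1 ▸ h2, ⟨es, h3⟩⟩

lemma isWalk_mono {V : Type*} {A B : V → V → Prop} (hAB : ∀ a b, A a b → B a b) :
    ∀ (l : List (V × V)) (u w : V), IsWalk A u l w → IsWalk B u l w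
  | [], _, _, h => h
  | e :: es, u, w, h => ⟨h.1, hAB _ _ h.2.1, isWalk_mono hAB es _ _ h.2.2⟩

lemma wf_of_acyclic {V : Type*} [Fintype V] {A : V → V → Prop} (hA : IsAcyclic A) :
    WellFounded (fun u v => A v u) := by
  have key : ∀ v w, Relation.TransGen (fun u v => A v u) v w →
      ∃ l, l ≠ [] ∧ IsWalk A w l v := by
    intro v w h
    induction h with
    | single h => exact ⟨[(_, v)], by simp, rfl, h, rfl⟩
    | @tail b c _ h ih =>
      obtain ⟨l, hl, hw⟩ := ih
      exact ⟨(c, b) :: l, by simp, rfl, h, hw⟩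
  have hirr : IsIrrefl V (Relation.TransGen (fun u v => A v u)) := ⟨fun v hv => by
    obtain ⟨l, hl, hw⟩ := key v v hv
    exact hA v l hl hw⟩
  haveI := hirr
  exact Subrelation.wf (r := Relation.TransGen (fun u v => A v u))
    (fun h => Relation.TransGen.single h)
    (Finite.wellFounded_of_trans_of_irrefl _)
set_option maxHeartbeats 1000000 in
theorem aux_two_terminals {V : Type*} [Fintype V] (A : V → V → Prop) (hA : IsAcyclic A)
    (t0 t1 : V) :
    ∃ A' : V → V → Prop, (∀ a b, A' a b → A a b) ∧
      ∀ v, Reaches A v t0 → Reaches A v t1 →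
        (∃! P, IsWalk A' v P t0) ∧ (∃! P, IsWalk A' v P t1) := by
  classical
  -- choice functions
  have c0 : ∀ v, ∃ u, (Reaches A v t0 ∧ ¬ Reaches A v t1 ∧ v ≠ t0) →
      (A v u ∧ Reaches A u t0 ∧ ¬ Reaches A u t1) := by
    intro v
    by_cases h : Reaches A v t0 ∧ ¬ Reaches A v t1 ∧ v ≠ t0
    · obtain ⟨u, hu, hr⟩ := exists_step h.1 h.2.2
      exact ⟨u, fun _ => ⟨hu, hr, fun hr1 => h.2.1 (reaches_head hu hr1)⟩⟩
    · exact ⟨v, fun hh => absurd hh h⟩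
  choose σ0 hσ0 using c0
  have c1 : ∀ v, ∃ u, (Reaches A v t1 ∧ ¬ Reaches A v t0 ∧ v ≠ t1) →
      (A v u ∧ Reaches A u t1 ∧ ¬ Reaches A u t0) := by
    intro v
    by_cases h : Reaches A v t1 ∧ ¬ Reaches A v t0 ∧ v ≠ t1
    · obtain ⟨u, hu, hr⟩ := exists_step h.1 h.2.2
      exact ⟨u, fun _ => ⟨hu, hr, fun hr0 => h.2.1 (reaches_head hu hr0)⟩⟩
    · exact ⟨v, fun hh => absurd hh h⟩
  choose σ1 hσ1 using c1
  have cB : ∀ v, ∃ u, (Reaches A v t0 ∧ Reaches A v t1 ∧ v ≠ t0 ∧ v ≠ t1 ∧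
      (∃ w, A v w ∧ Reaches A w t0 ∧ Reaches A w t1)) →
      (A v u ∧ Reaches A u t0 ∧ Reaches A u t1) := by
    intro v
    by_cases h : ∃ w, A v w ∧ Reaches A w t0 ∧ Reaches A w t1
    · obtain ⟨w, hw⟩ := h
      exact ⟨w, fun _ => hw⟩
    · exact ⟨v, fun hh => absurd hh.2.2.2.2 h⟩
  choose σB hσB using cB
  have cτ0 : ∀ v, ∃ u, (Reaches A v t0 ∧ Reaches A v t1 ∧ v ≠ t0 ∧ v ≠ t1 ∧
      ¬ (∃ w, A v w ∧ Reaches A w t0 ∧ Reaches A w t1)) →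
      (A v u ∧ Reaches A u t0 ∧ ¬ Reaches A u t1) := by
    intro v
    by_cases h : Reaches A v t0 ∧ v ≠ t0
    · obtain ⟨u, hu, hr⟩ := exists_step h.1 h.2
      exact ⟨u, fun hh => ⟨hu, hr, fun hr1 => hh.2.2.2.2 ⟨u, hu, hr, hr1⟩⟩⟩
    · exact ⟨v, fun hh => absurd ⟨hh.1, hh.2.2.1⟩ h⟩
  choose τ0 hτ0 using cτ0
  have cτ1 : ∀ v, ∃ u, (Reaches A v t0 ∧ Reaches A v t1 ∧ v ≠ t0 ∧ v ≠ t1 ∧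
      ¬ (∃ w, A v w ∧ Reaches A w t0 ∧ Reaches A w t1)) →
      (A v u ∧ Reaches A u t1 ∧ ¬ Reaches A u t0) := by
    intro v
    by_cases h : Reaches A v t1 ∧ v ≠ t1
    · obtain ⟨u, hu, hr⟩ := exists_step h.1 h.2
      exact ⟨u, fun hh => ⟨hu, hr, fun hr0 => hh.2.2.2.2 ⟨u, hu, hr0, hr⟩⟩⟩
    · exact ⟨v, fun hh => absurd ⟨hh.2.1, hh.2.2.2.1⟩ h⟩
  choose τ1 hτ1 using cτ1
  have ce : ∃ u, (Reaches A t0 t1 ∧ t0 ≠ t1) →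
      (A t0 u ∧ Reaches A u t1 ∧ ¬ Reaches A u t0) := by
    by_cases h : Reaches A t0 t1 ∧ t0 ≠ t1
    · obtain ⟨u, hu, hr⟩ := exists_step h.1 h.2
      refine ⟨u, fun _ => ⟨hu, hr, fun hr0 => ?_⟩⟩
      obtain ⟨P, hP⟩ := hr0
      exact hA t0 ((t0, u) :: P) (by simp) ⟨rfl, hu, hP⟩
    · exact ⟨t0, fun hh => absurd hh h⟩
  obtain ⟨ρ0, hρ0⟩ := ce
  have cf : ∃ u, (Reaches A t1 t0 ∧ t1 ≠ t0) →
      (A t1 u ∧ Reaches A u t0 ∧ ¬ Reaches A u t1) := by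
    by_cases h : Reaches A t1 t0 ∧ t1 ≠ t0
    · obtain ⟨u, hu, hr⟩ := exists_step h.1 h.2
      refine ⟨u, fun _ => ⟨hu, hr, fun hr1 => ?_⟩⟩
      obtain ⟨P, hP⟩ := hr1
      exact hA t1 ((t1, u) :: P) (by simp) ⟨rfl, hu, hP⟩
    · exact ⟨t1, fun hh => absurd hh h⟩
  obtain ⟨ρ1, hρ1⟩ := cf
  set A' : V → V → Prop := fun v u =>
    ((Reaches A v t0 ∧ ¬ Reaches A v t1 ∧ v ≠ t0) ∧ u = σ0 v) ∨
    ((Reaches A v t1 ∧ ¬ Reaches A v t0 ∧ v ≠ t1) ∧ u = σ1 v) ∨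
    ((Reaches A v t0 ∧ Reaches A v t1 ∧ v ≠ t0 ∧ v ≠ t1 ∧
        (∃ w, A v w ∧ Reaches A w t0 ∧ Reaches A w t1)) ∧ u = σB v) ∨
    ((Reaches A v t0 ∧ Reaches A v t1 ∧ v ≠ t0 ∧ v ≠ t1 ∧
        ¬ (∃ w, A v w ∧ Reaches A w t0 ∧ Reaches A w t1)) ∧ (u = τ0 v ∨ u = τ1 v)) ∨
    ((v = t0 ∧ Reaches A t0 t1 ∧ t0 ≠ t1) ∧ u = ρ0) ∨
    ((v = t1 ∧ Reaches A t1 t0 ∧ t1 ≠ t0) ∧ u = ρ1) with hA'def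
  have hsub : ∀ a b, A' a b → A a b := by
    intro a b h
    simp only [hA'def] at h
    rcases h with ⟨g, rfl⟩ | ⟨g, rfl⟩ | ⟨g, rfl⟩ | ⟨g, h⟩ | ⟨⟨rfl, g1, g2⟩, rfl⟩ |
      ⟨⟨rfl, g1, g2⟩, rfl⟩
    · exact (hσ0 a g).1
    · exact (hσ1 a g).1
    · exact (hσB a g).1
    · rcases h with rfl | rfl
      · exact (hτ0 a g).1
      · exact (hτ1 a g).1
    · exact (hρ0 ⟨g1, g2⟩).1
    · exact (hρ1 ⟨g1, g2⟩).1
  have noCross1 : ∀ (l : List (V × V)) (v : V), ¬ Reaches A v t0 → ¬ IsWalk A' v l t0 := by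
    intro l
    induction l with
    | nil =>
      intro v hv h
      exact hv (h ▸ reaches_refl A t0)
    | cons e es ih =>
      intro v hv h
      obtain ⟨he, ha, hw⟩ := h
      subst he
      simp only [hA'def] at ha
      rcases ha with ⟨g, hu⟩ | ⟨g, hu⟩ | ⟨g, hu⟩ | ⟨g, h2⟩ | ⟨⟨h1, g1, g2⟩, hu⟩ |
        ⟨⟨h1, g1, g2⟩, hu⟩
      · exact hv g.1
      · exact ih _ (by rw [hu]; exact (hσ1 _ g).2.2) hw
      · exact hv g.1
      · exact hv g.1
      · exact hv (h1 ▸ reaches_refl A t0)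
      · exact hv (h1 ▸ g1)
  have noCross0 : ∀ (l : List (V × V)) (v : V), ¬ Reaches A v t1 → ¬ IsWalk A' v l t1 := by
    intro l
    induction l with
    | nil =>
      intro v hv h
      exact hv (h ▸ reaches_refl A t1)
    | cons e es ih =>
      intro v hv h
      obtain ⟨he, ha, hw⟩ := h
      subst he
      simp only [hA'def] at ha
      rcases ha with ⟨g, hu⟩ | ⟨g, hu⟩ | ⟨g, hu⟩ | ⟨g, h2⟩ | ⟨⟨h1, g1, g2⟩, hu⟩ |
        ⟨⟨h1, g1, g2⟩, hu⟩
      · exact ih _ (by rw [hu]; exact (hσ0 _ g).2.2) hw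
      · exact hv g.1
      · exact hv g.2.1
      · exact hv g.2.1
      · exact hv (h1 ▸ g1)
      · exact hv (h1 ▸ reaches_refl A t1)
  have hr00 : Reaches A t0 t0 := reaches_refl A t0
  have hr11 : Reaches A t1 t1 := reaches_refl A t1
  have hx12 : ∀ v : V, (Reaches A v t0 ∧ ¬ Reaches A v t1 ∧ v ≠ t0) → (Reaches A v t1 ∧ ¬ Reaches A v t0 ∧ v ≠ t1) → False := 
    fun _ a b => (b.2.1 a.1)
  have hx13 : ∀ v : V, (Reaches A v t0 ∧ ¬ Reaches A v t1 ∧ v ≠ t0) → (Reaches A v t0 ∧ Reaches A v t1 ∧ v ≠ t0 ∧ v ≠ t1 ∧ (∃ w, A v w ∧ Reaches A w t0 ∧ Reaches A w t1)) → False := 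
    fun _ a b => (a.2.1 b.2.1)
  have hx14 : ∀ v : V, (Reaches A v t0 ∧ ¬ Reaches A v t1 ∧ v ≠ t0) → (Reaches A v t0 ∧ Reaches A v t1 ∧ v ≠ t0 ∧ v ≠ t1 ∧ ¬ (∃ w, A v w ∧ Reaches A w t0 ∧ Reaches A w t1)) → False := 
    fun _ a b => (a.2.1 b.2.1)
  have hx15 : ∀ v : V, (Reaches A v t0 ∧ ¬ Reaches A v t1 ∧ v ≠ t0) → (v = t0 ∧ Reaches A t0 t1 ∧ t0 ≠ t1) → False := 
    fun _ a b => (a.2.2 b.1)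
  have hx16 : ∀ v : V, (Reaches A v t0 ∧ ¬ Reaches A v t1 ∧ v ≠ t0) → (v = t1 ∧ Reaches A t1 t0 ∧ t1 ≠ t0) → False := 
    fun _ a b => (a.2.1 (b.1 ▸ hr11))
  have hx23 : ∀ v : V, (Reaches A v t1 ∧ ¬ Reaches A v t0 ∧ v ≠ t1) → (Reaches A v t0 ∧ Reaches A v t1 ∧ v ≠ t0 ∧ v ≠ t1 ∧ (∃ w, A v w ∧ Reaches A w t0 ∧ Reaches A w t1)) → False := 
    fun _ a b => (a.2.1 b.1)
  have hx24 : ∀ v : V, (Reaches A v t1 ∧ ¬ Reaches A v t0 ∧ v ≠ t1) → (Reaches A v t0 ∧ Reaches A v t1 ∧ v ≠ t0 ∧ v ≠ t1 ∧ ¬ (∃ w, A v w ∧ Reaches A w t0 ∧ Reaches A w t1)) → False := 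
    fun _ a b => (a.2.1 b.1)
  have hx25 : ∀ v : V, (Reaches A v t1 ∧ ¬ Reaches A v t0 ∧ v ≠ t1) → (v = t0 ∧ Reaches A t0 t1 ∧ t0 ≠ t1) → False := 
    fun _ a b => (a.2.1 (b.1 ▸ hr00))
  have hx26 : ∀ v : V, (Reaches A v t1 ∧ ¬ Reaches A v t0 ∧ v ≠ t1) → (v = t1 ∧ Reaches A t1 t0 ∧ t1 ≠ t0) → False := 
    fun _ a b => (a.2.2 b.1)
  have hx34 : ∀ v : V, (Reaches A v t0 ∧ Reaches A v t1 ∧ v ≠ t0 ∧ v ≠ t1 ∧ (∃ w, A v w ∧ Reaches A w t0 ∧ Reaches A w t1)) → (Reaches A v t0 ∧ Reaches A v t1 ∧ v ≠ t0 ∧ v ≠ t1 ∧ ¬ (∃ w, A v w ∧ Reaches A w t0 ∧ Reaches A w t1)) → False := 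
    fun _ a b => (b.2.2.2.2 a.2.2.2.2)
  have hx35 : ∀ v : V, (Reaches A v t0 ∧ Reaches A v t1 ∧ v ≠ t0 ∧ v ≠ t1 ∧ (∃ w, A v w ∧ Reaches A w t0 ∧ Reaches A w t1)) → (v = t0 ∧ Reaches A t0 t1 ∧ t0 ≠ t1) → False := 
    fun _ a b => (a.2.2.1 b.1)
  have hx36 : ∀ v : V, (Reaches A v t0 ∧ Reaches A v t1 ∧ v ≠ t0 ∧ v ≠ t1 ∧ (∃ w, A v w ∧ Reaches A w t0 ∧ Reaches A w t1)) → (v = t1 ∧ Reaches A t1 t0 ∧ t1 ≠ t0) → False := 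
    fun _ a b => (a.2.2.2.1 b.1)
  have hx45 : ∀ v : V, (Reaches A v t0 ∧ Reaches A v t1 ∧ v ≠ t0 ∧ v ≠ t1 ∧ ¬ (∃ w, A v w ∧ Reaches A w t0 ∧ Reaches A w t1)) → (v = t0 ∧ Reaches A t0 t1 ∧ t0 ≠ t1) → False := 
    fun _ a b => (a.2.2.1 b.1)
  have hx46 : ∀ v : V, (Reaches A v t0 ∧ Reaches A v t1 ∧ v ≠ t0 ∧ v ≠ t1 ∧ ¬ (∃ w, A v w ∧ Reaches A w t0 ∧ Reaches A w t1)) → (v = t1 ∧ Reaches A t1 t0 ∧ t1 ≠ t0) → False := 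
    fun _ a b => (a.2.2.2.1 b.1)
  have hx56 : ∀ v : V, (v = t0 ∧ Reaches A t0 t1 ∧ t0 ≠ t1) → (v = t1 ∧ Reaches A t1 t0 ∧ t1 ≠ t0) → False := 
    fun _ a b => (a.2.2 (a.1.symm.trans b.1))
  have det0 : ∀ v b d, A' v b → A' v d → (∃ l, IsWalk A' b l t0) →
      (∃ l, IsWalk A' d l t0) → b = d := by
    intro v b d h1 h2 hb hd
    simp only [hA'def] at h1 h2
    rcases h1 with ⟨g1, rfl⟩ | ⟨g1, rfl⟩ | ⟨g1, rfl⟩ | ⟨g1, hb'⟩ | ⟨g1, rfl⟩ | ⟨g1, rfl⟩ <;>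
      rcases h2 with ⟨g2, rfl⟩ | ⟨g2, rfl⟩ | ⟨g2, rfl⟩ | ⟨g2, hd'⟩ | ⟨g2, rfl⟩ | ⟨g2, rfl⟩ <;>
      first
        | rfl
        | exact (hx12 v g1 g2).elim
        | exact (hx12 v g2 g1).elim
        | exact (hx13 v g1 g2).elim
        | exact (hx13 v g2 g1).elim
        | exact (hx14 v g1 g2).elim
        | exact (hx14 v g2 g1).elim
        | exact (hx15 v g1 g2).elim
        | exact (hx15 v g2 g1).elim
        | exact (hx16 v g1 g2).elim
        | exact (hx16 v g2 g1).elim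
        | exact (hx23 v g1 g2).elim
        | exact (hx23 v g2 g1).elim
        | exact (hx24 v g1 g2).elim
        | exact (hx24 v g2 g1).elim
        | exact (hx25 v g1 g2).elim
        | exact (hx25 v g2 g1).elim
        | exact (hx26 v g1 g2).elim
        | exact (hx26 v g2 g1).elim
        | exact (hx34 v g1 g2).elim
        | exact (hx34 v g2 g1).elim
        | exact (hx35 v g1 g2).elim
        | exact (hx35 v g2 g1).elim
        | exact (hx36 v g1 g2).elim
        | exact (hx36 v g2 g1).elim
        | exact (hx45 v g1 g2).elim
        | exact (hx45 v g2 g1).elim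
        | exact (hx46 v g1 g2).elim
        | exact (hx46 v g2 g1).elim
        | exact (hx56 v g1 g2).elim
        | exact (hx56 v g2 g1).elim
        | (rcases hb' with rfl | rfl <;> rcases hd' with rfl | rfl <;>
            first
              | rfl
              | (obtain ⟨l, hl⟩ := hb; exact absurd hl (noCross1 l _ (hτ1 _ g1).2.2))
              | (obtain ⟨l, hl⟩ := hd; exact absurd hl (noCross1 l _ (hτ1 _ g2).2.2)))
  have det1 : ∀ v b d, A' v b → A' v d → (∃ l, IsWalk A' b l t1) →
      (∃ l, IsWalk A' d l t1) → b = d := by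
    intro v b d h1 h2 hb hd
    simp only [hA'def] at h1 h2
    rcases h1 with ⟨g1, rfl⟩ | ⟨g1, rfl⟩ | ⟨g1, rfl⟩ | ⟨g1, hb'⟩ | ⟨g1, rfl⟩ | ⟨g1, rfl⟩ <;>
      rcases h2 with ⟨g2, rfl⟩ | ⟨g2, rfl⟩ | ⟨g2, rfl⟩ | ⟨g2, hd'⟩ | ⟨g2, rfl⟩ | ⟨g2, rfl⟩ <;>
      first
        | rfl
        | exact (hx12 v g1 g2).elim
        | exact (hx12 v g2 g1).elim
        | exact (hx13 v g1 g2).elim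
        | exact (hx13 v g2 g1).elim
        | exact (hx14 v g1 g2).elim
        | exact (hx14 v g2 g1).elim
        | exact (hx15 v g1 g2).elim
        | exact (hx15 v g2 g1).elim
        | exact (hx16 v g1 g2).elim
        | exact (hx16 v g2 g1).elim
        | exact (hx23 v g1 g2).elim
        | exact (hx23 v g2 g1).elim
        | exact (hx24 v g1 g2).elim
        | exact (hx24 v g2 g1).elim
        | exact (hx25 v g1 g2).elim
        | exact (hx25 v g2 g1).elim
        | exact (hx26 v g1 g2).elim
        | exact (hx26 v g2 g1).elim
        | exact (hx34 v g1 g2).elim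
        | exact (hx34 v g2 g1).elim
        | exact (hx35 v g1 g2).elim
        | exact (hx35 v g2 g1).elim
        | exact (hx36 v g1 g2).elim
        | exact (hx36 v g2 g1).elim
        | exact (hx45 v g1 g2).elim
        | exact (hx45 v g2 g1).elim
        | exact (hx46 v g1 g2).elim
        | exact (hx46 v g2 g1).elim
        | exact (hx56 v g1 g2).elim
        | exact (hx56 v g2 g1).elim
        | (rcases hb' with rfl | rfl <;> rcases hd' with rfl | rfl <;>
            first
              | rfl
              | (obtain ⟨l, hl⟩ := hb; exact absurd hl (noCross0 l _ (hτ0 _ g1).2.2))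
              | (obtain ⟨l, hl⟩ := hd; exact absurd hl (noCross0 l _ (hτ0 _ g2).2.2)))
  have uniq0 : ∀ (P : List (V × V)) (v : V) (Q : List (V × V)),
      IsWalk A' v P t0 → IsWalk A' v Q t0 → P = Q := by
    intro P
    induction P with
    | nil =>
      intro v Q h1 h2
      cases Q with
      | nil => rfl
      | cons f Q' =>
        exfalso
        have hv : v = t0 := h1
        subst hv
        exact hA v (f :: Q') (by simp) (isWalk_mono hsub _ _ _ h2)
    | cons e P' ih =>
      intro v Q h1 h2
      cases Q with
      | nil =>
        exfalso
        have hv : v = t0 := h2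
        subst hv
        exact hA v (e :: P') (by simp) (isWalk_mono hsub _ _ _ h1)
      | cons f Q' =>
        obtain ⟨he, ha, hw1⟩ := h1
        obtain ⟨hf, hc, hw2⟩ := h2
        have hbd : e.2 = f.2 := det0 v e.2 f.2 (he ▸ ha) (hf ▸ hc) ⟨P', hw1⟩ ⟨Q', hw2⟩
        have hef : e = f := Prod.ext (he.trans hf.symm) hbd
        subst hef
        rw [ih e.2 Q' hw1 (hbd ▸ hw2)]
  have uniq1 : ∀ (P : List (V × V)) (v : V) (Q : List (V × V)),
      IsWalk A' v P t1 → IsWalk A' v Q t1 → P = Q := by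
    intro P
    induction P with
    | nil =>
      intro v Q h1 h2
      cases Q with
      | nil => rfl
      | cons f Q' =>
        exfalso
        have hv : v = t1 := h1
        subst hv
        exact hA v (f :: Q') (by simp) (isWalk_mono hsub _ _ _ h2)
    | cons e P' ih =>
      intro v Q h1 h2
      cases Q with
      | nil =>
        exfalso
        have hv : v = t1 := h2
        subst hv
        exact hA v (e :: P') (by simp) (isWalk_mono hsub _ _ _ h1)
      | cons f Q' =>
        obtain ⟨he, ha, hw1⟩ := h1
        obtain ⟨hf, hc, hw2⟩ := h2
        have hbd : e.2 = f.2 := det1 v e.2 f.2 (he ▸ ha) (hf ▸ hc) ⟨P', hw1⟩ ⟨Q', hw2⟩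
        have hef : e = f := Prod.ext (he.trans hf.symm) hbd
        subst hef
        rw [ih e.2 Q' hw1 (hbd ▸ hw2)]
  have hwf := wf_of_acyclic hA
  have E0 : ∀ v, Reaches A v t0 → ¬ Reaches A v t1 → ∃ P, IsWalk A' v P t0 := by
    have := hwf.induction
      (C := fun v => Reaches A v t0 → ¬ Reaches A v t1 → ∃ P, IsWalk A' v P t0)
    intro v
    apply this
    intro x ih h0 h1
    by_cases hx : x = t0
    · exact ⟨[], hx⟩
    · have g : Reaches A x t0 ∧ ¬ Reaches A x t1 ∧ x ≠ t0 := ⟨h0, h1, hx⟩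
      obtain ⟨ha, hr0, hr1⟩ := hσ0 x g
      obtain ⟨P, hP⟩ := ih (σ0 x) ha hr0 hr1
      exact ⟨(x, σ0 x) :: P, rfl, Or.inl ⟨g, rfl⟩, hP⟩
  have E1 : ∀ v, Reaches A v t1 → ¬ Reaches A v t0 → ∃ P, IsWalk A' v P t1 := by
    have := hwf.induction
      (C := fun v => Reaches A v t1 → ¬ Reaches A v t0 → ∃ P, IsWalk A' v P t1)
    intro v
    apply this
    intro x ih h1 h0
    by_cases hx : x = t1
    · exact ⟨[], hx⟩
    · have g : Reaches A x t1 ∧ ¬ Reaches A x t0 ∧ x ≠ t1 := ⟨h1, h0, hx⟩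
      obtain ⟨ha, hr1, hr0⟩ := hσ1 x g
      obtain ⟨P, hP⟩ := ih (σ1 x) ha hr1 hr0
      exact ⟨(x, σ1 x) :: P, rfl, Or.inr (Or.inl ⟨g, rfl⟩), hP⟩
  have EB0 : ∀ v, Reaches A v t0 → Reaches A v t1 → ∃ P, IsWalk A' v P t0 := by
    have := hwf.induction
      (C := fun v => Reaches A v t0 → Reaches A v t1 → ∃ P, IsWalk A' v P t0)
    intro v
    apply this
    intro x ih h0 h1
    by_cases hx0 : x = t0
    · exact ⟨[], hx0⟩
    by_cases hx1 : x = t1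
    · subst hx1
      have g2 : Reaches A x t0 := h0
      have g3 : x ≠ t0 := hx0
      obtain ⟨ha, hr0, hr1⟩ := hρ1 ⟨g2, g3⟩
      obtain ⟨P, hP⟩ := E0 ρ1 hr0 hr1
      exact ⟨(x, ρ1) :: P, rfl, Or.inr (Or.inr (Or.inr (Or.inr (Or.inr ⟨⟨rfl, g2, g3⟩, rfl⟩)))),
        hP⟩
    by_cases hB : ∃ w, A x w ∧ Reaches A w t0 ∧ Reaches A w t1
    · have g : Reaches A x t0 ∧ Reaches A x t1 ∧ x ≠ t0 ∧ x ≠ t1 ∧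
          (∃ w, A x w ∧ Reaches A w t0 ∧ Reaches A w t1) := ⟨h0, h1, hx0, hx1, hB⟩
      obtain ⟨ha, hr0, hr1⟩ := hσB x g
      obtain ⟨P, hP⟩ := ih (σB x) ha hr0 hr1
      exact ⟨(x, σB x) :: P, rfl, Or.inr (Or.inr (Or.inl ⟨g, rfl⟩)), hP⟩
    · have g : Reaches A x t0 ∧ Reaches A x t1 ∧ x ≠ t0 ∧ x ≠ t1 ∧
          ¬ (∃ w, A x w ∧ Reaches A w t0 ∧ Reaches A w t1) := ⟨h0, h1, hx0, hx1, hB⟩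
      obtain ⟨ha, hr0, hr1⟩ := hτ0 x g
      obtain ⟨P, hP⟩ := E0 (τ0 x) hr0 hr1
      exact ⟨(x, τ0 x) :: P, rfl, Or.inr (Or.inr (Or.inr (Or.inl ⟨g, Or.inl rfl⟩))), hP⟩
  have EB1 : ∀ v, Reaches A v t0 → Reaches A v t1 → ∃ P, IsWalk A' v P t1 := by
    have := hwf.induction
      (C := fun v => Reaches A v t0 → Reaches A v t1 → ∃ P, IsWalk A' v P t1)
    intro v
    apply this
    intro x ih h0 h1
    by_cases hx1 : x = t1
    · exact ⟨[], hx1⟩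
    by_cases hx0 : x = t0
    · subst hx0
      have g2 : Reaches A x t1 := h1
      have g3 : x ≠ t1 := hx1
      obtain ⟨ha, hr1, hr0⟩ := hρ0 ⟨g2, g3⟩
      obtain ⟨P, hP⟩ := E1 ρ0 hr1 hr0
      exact ⟨(x, ρ0) :: P, rfl, Or.inr (Or.inr (Or.inr (Or.inr (Or.inl ⟨⟨rfl, g2, g3⟩, rfl⟩)))),
        hP⟩
    by_cases hB : ∃ w, A x w ∧ Reaches A w t0 ∧ Reaches A w t1
    · have g : Reaches A x t0 ∧ Reaches A x t1 ∧ x ≠ t0 ∧ x ≠ t1 ∧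
          (∃ w, A x w ∧ Reaches A w t0 ∧ Reaches A w t1) := ⟨h0, h1, hx0, hx1, hB⟩
      obtain ⟨ha, hr0, hr1⟩ := hσB x g
      obtain ⟨P, hP⟩ := ih (σB x) ha hr0 hr1
      exact ⟨(x, σB x) :: P, rfl, Or.inr (Or.inr (Or.inl ⟨g, rfl⟩)), hP⟩
    · have g : Reaches A x t0 ∧ Reaches A x t1 ∧ x ≠ t0 ∧ x ≠ t1 ∧
          ¬ (∃ w, A x w ∧ Reaches A w t0 ∧ Reaches A w t1) := ⟨h0, h1, hx0, hx1, hB⟩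
      obtain ⟨ha, hr1, hr0⟩ := hτ1 x g
      obtain ⟨P, hP⟩ := E1 (τ1 x) hr1 hr0
      exact ⟨(x, τ1 x) :: P, rfl, Or.inr (Or.inr (Or.inr (Or.inl ⟨g, Or.inr rfl⟩))), hP⟩
  refine ⟨A', hsub, fun v h0 h1 => ⟨?_, ?_⟩⟩
  · obtain ⟨P, hP⟩ := EB0 v h0 h1
    exact ⟨P, hP, fun Q hQ => uniq0 Q v P hQ hP⟩
  · obtain ⟨P, hP⟩ := EB1 v h0 h1
    exact ⟨P, hP, fun Q hQ => uniq1 Q v P hQ hP⟩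

/-- Let `G` be a finite DAG with `n` sources `S i` (having no incoming
edges) and two terminals `T 0, T 1`, each terminal reachable from each source.  Then
there is a subgraph `A'` of `A` in which, for every `i` and `j`, there is exactly one
directed path (as an edge sequence) from `S i` to `T j`. -/
theorem exists_subgraph_unique_paths_n_sources_two_terminals
    {V : Type*} [Fintype V] (A : V → V → Prop) (hA : IsAcyclic A)
    (n : ℕ) (S : Fin n → V) (T : Fin 2 → V)
    (hsrc : ∀ (i : Fin n) (w : V), ¬ A w (S i))
    (hconn : ∀ i j, ∃ P, IsWalk A (S i) P (T j)) :
    ∃ A' : V → V → Prop, (∀ a b, A' a b → A a b) ∧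
      ∀ i j, ∃! P : List (V × V), IsWalk A' (S i) P (T j) := by
  obtain ⟨A', hsub, h⟩ := aux_two_terminals A hA (T 0) (T 1)
  refine ⟨A', hsub, fun i j => ?_⟩
  have h0 : Reaches A (S i) (T 0) := hconn i 0
  have h1 : Reaches A (S i) (T 1) := hconn i 1
  have hh := h (S i) h0 h1
  fin_cases j
  · exact hh.1
  · exact hh.2
end

section
/- Let G' be a minimal DAG for sources S1',...,S_{n-1}' and terminals T1', T2' (max-flow(Si',Tj')=1 for all i,j, and minimal with respect to edge removal), and let u be a vertex of G' lying on some source-terminal path. If P is a new path entering G' for the first time at u, and G^{(u)} denotes the union over all sources Si' having a path to u (in G' ∪ P) of the unique path from Si' to u, then removing G^{(u)} from G' ∪ P preserves, for every source Si' not in this set, the existence of paths from Si' to both T1' and T2', and preserves the existence of paths from u to both terminals (before removal had them). -/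
/-- The vertices visited by a walk starting at `u` with edge list `l`. -/
def walkVerts {V : Type*} (u : V) (l : List (V × V)) : List V := u :: l.map Prod.snd

/-- The max-flow from `s` to `t` in a unit-capacity digraph: the largest number of
pairwise edge-disjoint directed paths from `s` to `t`. -/
noncomputable def maxFlow {V : Type*} (A : V → V → Prop) (s t : V) : ℕ :=
  sSup {k | ∃ f : Fin k → List (V × V), (∀ i, IsWalk A s (f i) t) ∧
    ∀ i j, i ≠ j → ∀ e, e ∈ f i → e ∉ f j}

/-!
An edge `(a, b)` that lies on some walk into `u` gives a walk from `b` to `u`. So if a walk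
from `x` used such an edge, splicing the two walks at `b` would give a nonempty walk from
`x` to `u`. A source without a path to `u` has no such walk at all, and `u` itself has none
because the graph is acyclic; hence their walks to the terminals avoid all of `Gu`.
-/

namespace IsWalk

variable {V : Type*} {A : V → V → Prop}

theorem append {x y z : V} {l m : List (V × V)} (hl : IsWalk A x l y) (hm : IsWalk A y m z) :
    IsWalk A x (l ++ m) z := by
  induction l generalizing x with
  | nil => cases hl; exact hm
  | cons e es ih => exact ⟨hl.1, hl.2.1, ih hl.2.2⟩

theorem exists_prefix_suffix_of_mem {x y a b : V} {l : List (V × V)} (hl : IsWalk A x l y)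
    (hab : (a, b) ∈ l) : ∃ l₁ l₂, IsWalk A x (l₁ ++ [(a, b)]) b ∧ IsWalk A b l₂ y := by
  induction l generalizing x with
  | nil => cases hab
  | cons e es ih =>
    rcases List.mem_cons.1 hab with rfl | hes
    · exact ⟨[], es, ⟨hl.1, hl.2.1, rfl⟩, hl.2.2⟩
    · obtain ⟨l₁, l₂, hpre, hsuf⟩ := ih hl.2.2 hes
      exact ⟨e :: l₁, l₂, ⟨hl.1, hl.2.1, hpre⟩, hsuf⟩

theorem exists_ne_nil_of_mem_of_mem {x y s t a b : V} {l m : List (V × V)}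
    (hl : IsWalk A x l y) (hm : IsWalk A s m t) (hal : (a, b) ∈ l) (ham : (a, b) ∈ m) :
    ∃ L, L ≠ [] ∧ IsWalk A x L t := by
  obtain ⟨l₁, -, hpre, -⟩ := hl.exists_prefix_suffix_of_mem hal
  obtain ⟨-, m₂, -, hsuf⟩ := hm.exists_prefix_suffix_of_mem ham
  exact ⟨l₁ ++ [(a, b)] ++ m₂, by simp, hpre.append hsuf⟩

theorem mono {B : V → V → Prop} (hAB : ∀ a b, A a b → B a b) {x y : V} {l : List (V × V)}
    (hl : IsWalk A x l y) : IsWalk B x l y := by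
  induction l generalizing x with
  | nil => exact hl
  | cons e es ih => exact ⟨hl.1, hAB _ _ hl.2.1, ih hl.2.2⟩

theorem restrict {G : V → V → Prop} {x y : V} {l : List (V × V)} (hl : IsWalk A x l y)
    (hG : ∀ e ∈ l, ¬ G e.1 e.2) : IsWalk (fun a b => A a b ∧ ¬ G a b) x l y := by
  induction l generalizing x with
  | nil => exact hl
  | cons e es ih =>
    exact ⟨hl.1, ⟨hl.2.1, hG e List.mem_cons_self⟩,
      ih hl.2.2 fun e' he' => hG e' (List.mem_cons_of_mem _ he')⟩

theorem avoids_edges_into {G : V → V → Prop} {u x y : V} {l : List (V × V)}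
    (hG : ∀ a b, G a b → ∃ s m, IsWalk A s m u ∧ (a, b) ∈ m)
    (hx : ∀ L, L ≠ [] → ¬ IsWalk A x L u) (hl : IsWalk A x l y) :
    IsWalk (fun a b => A a b ∧ ¬ G a b) x l y := by
  refine hl.restrict ?_
  rintro ⟨a, b⟩ hal hGab
  obtain ⟨s, m, hm, ham⟩ := hG a b hGab
  obtain ⟨L, hL, hxL⟩ := hl.exists_ne_nil_of_mem_of_mem hm hal ham
  exact hx L hL hxL

end IsWalk

theorem exists_isWalk_of_maxFlow_ne_zero {V : Type*} {A : V → V → Prop} {s t : V}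
    (h : maxFlow A s t ≠ 0) : ∃ l, IsWalk A s l t := by
  by_contra! hnone
  refine h ?_
  suffices hflows : {k | ∃ f : Fin k → List (V × V), (∀ i, IsWalk A s (f i) t) ∧
      ∀ i j, i ≠ j → ∀ e, e ∈ f i → e ∉ f j} = {0} by
    rw [maxFlow, hflows, csSup_singleton]
  ext k
  simp only [Set.mem_ofPred_eq, Set.mem_singleton_iff]
  constructor
  · rintro ⟨f, hf, -⟩
    by_contra hk
    exact hnone _ (hf ⟨0, Nat.pos_of_ne_zero hk⟩)
  · rintro rfl
    exact ⟨Fin.elim0, fun i => i.elim0, fun i => i.elim0⟩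

theorem removing_paths_into_u_preserves_connectivity_general
    {V : Type*} (A : V → V → Prop)
    (n : ℕ) (S : Fin n → V) (T : Fin 2 → V)
    (hflow : ∀ i j, maxFlow A (S i) (T j) = 1)
    (u : V)
    (P : List (V × V))
    (B : V → V → Prop) (hB : ∀ a b, B a b ↔ (A a b ∨ (a, b) ∈ P))
    (hBacyc : IsAcyclic B)
    (Gu : V → V → Prop)
    (hGu : ∀ a b, Gu a b ↔ ∃ (i : Fin n) (Q : List (V × V)),
      IsWalk B (S i) Q u ∧ (a, b) ∈ Q) :
    (∀ i, (¬ ∃ Q, IsWalk B (S i) Q u) →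
      ∀ j, ∃ Q, IsWalk (fun a b => B a b ∧ ¬ Gu a b) (S i) Q (T j)) ∧
    (∀ j, (∃ Q, IsWalk B u Q (T j)) →
      ∃ Q, IsWalk (fun a b => B a b ∧ ¬ Gu a b) u Q (T j)) := by
  have hGu_into : ∀ a b, Gu a b → ∃ s Q, IsWalk B s Q u ∧ (a, b) ∈ Q := fun a b hab => by
    obtain ⟨i, Q, hQ, hab⟩ := (hGu a b).1 hab
    exact ⟨S i, Q, hQ, hab⟩
  constructor
  · intro i hi j
    obtain ⟨Q, hQ⟩ := exists_isWalk_of_maxFlow_ne_zero (by rw [hflow i j]; exact one_ne_zero)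
    exact ⟨Q, (hQ.mono fun a b hab => (hB a b).2 (Or.inl hab)).avoids_edges_into hGu_into
      fun L _ hL => hi ⟨L, hL⟩⟩
  · rintro j ⟨Q, hQ⟩
    exact ⟨Q, hQ.avoids_edges_into hGu_into (hBacyc u)⟩

/-- Let `A` be a minimal DAG for sources `S i` and terminals
`T 0, T 1` (all max-flows equal `1`, and deleting any edge makes some max-flow `0`), and
let `u` be a vertex of `A` lying on a source–terminal path.  Let `P` be a new path (edge
list, from `w` to `u`) entering `A` for the first time at `u`: its edges are not edges
of `A` and none of its vertices except `u` is a vertex of `A`.  Write `B = A ∪ P`, and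
suppose (as in the construction) `B` is acyclic and each source with a path to `u` in
`B` has a unique such path.  Let `Gu` consist of the edges lying on some source-to-`u`
path in `B`, and let `B⁻ = B − Gu`.  Then: every source with no path to `u` still has
paths to both terminals in `B⁻`, and if `u` had paths in `B` to the terminals, it still
has them in `B⁻`. -/
theorem removing_paths_into_u_preserves_connectivity
    {V : Type*} [Fintype V] (A : V → V → Prop)
    (n : ℕ) (S : Fin n → V) (T : Fin 2 → V)
    (hflow : ∀ i j, maxFlow A (S i) (T j) = 1)
    (hmin : ∀ a b, A a b →
      ∃ i j, maxFlow (fun x y => A x y ∧ ¬(x = a ∧ y = b)) (S i) (T j) = 0)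
    (u w : V)
    (hu : ∃ (i : Fin n) (j : Fin 2) (Q R : List (V × V)),
      IsWalk A (S i) Q u ∧ IsWalk A u R (T j))
    (P : List (V × V))
    (hPchain : IsWalk (fun _ _ => True) w P u)
    (hPnew : ∀ e ∈ P, ¬ A e.1 e.2)
    (hPverts : ∀ x ∈ walkVerts w P, x ≠ u → ¬ ∃ y, A x y ∨ A y x)
    (B : V → V → Prop) (hB : ∀ a b, B a b ↔ (A a b ∨ (a, b) ∈ P))
    (hBacyc : IsAcyclic B)
    (huniq : ∀ i, (∃ Q, IsWalk B (S i) Q u) → ∃! Q, IsWalk B (S i) Q u)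
    (Gu : V → V → Prop)
    (hGu : ∀ a b, Gu a b ↔ ∃ (i : Fin n) (Q : List (V × V)),
      IsWalk B (S i) Q u ∧ (a, b) ∈ Q) :
    (∀ i, (¬ ∃ Q, IsWalk B (S i) Q u) →
      ∀ j, ∃ Q, IsWalk (fun a b => B a b ∧ ¬ Gu a b) (S i) Q (T j)) ∧
    (∀ j, (∃ Q, IsWalk B u Q (T j)) →
      ∃ Q, IsWalk (fun a b => B a b ∧ ¬ Gu a b) u Q (T j)) :=
  removing_paths_into_u_preserves_connectivity_general A n S T hflow u P B hB hBacyc Gu hGu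
end
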